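/- Let λ ∈ (0,1) and θ ∈ (1/2, 1). Then the function f : ℝ → ℝ defined by f(c) = (c/((2θ−1+2cθ)(2−2θ−c(2θ−1))))^((1−θ)/(θ−1/2)) − (2θ−1+2cθ)²/(1−λ) has exactly one zero in the open interval ((1−θ)/θ, (1−θ)/(θ−1/2)); i.e., there exists a unique c ∈ ((1−θ)/θ, (1−θ)/(θ−1/2)) with f(c) = 0. -/

import Mathlib

/-!
Taking logarithms, `f c = 0` becomes `ψ c = -log (1 - λ)` with
`ψ c = κ log c - (κ + 2) log A(c) - κ log B(c)`, where `A(c) = 2θ - 1 + 2cθ`,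
`B(c) = 2 - 2θ - c(2θ - 1)` and `κ = (1 - θ)/(θ - 1/2)` is at once the exponent and the right
endpoint. At the left endpoint `A = 1` and `B = c`, so `ψ = 0`; at the right endpoint `B`
vanishes, so `ψ → ∞`; in between `ψ' = 4 (1 - θ - θc)² / (c A B) > 0`. As `-log (1 - λ) > 0`,
the intermediate value theorem and strict monotonicity give exactly one root.
-/

open Real Set Filter Topology

theorem StrictMonoOn.existsUnique_mem_Ioo_eq_of_tendsto_atTop {ψ : ℝ → ℝ} {a b L : ℝ}
    (hmono : StrictMonoOn ψ (Ico a b)) (hcont : ContinuousOn ψ (Ico a b)) (hab : a < b)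
    (ha : ψ a < L) (hb : Tendsto ψ (𝓝[<] b) atTop) :
    ∃! c, c ∈ Ioo a b ∧ ψ c = L := by
  obtain ⟨d, hdL, hd⟩ : ∃ d, L < ψ d ∧ d ∈ Ioo a b :=
    ((hb.eventually_gt_atTop L).and (Ioo_mem_nhdsLT hab)).exists
  obtain ⟨c, hc, hψc⟩ : L ∈ ψ '' Icc a d :=
    intermediate_value_Icc hd.1.le (hcont.mono (Icc_subset_Ico_right hd.2)) ⟨ha.le, hdL.le⟩
  have hca : a < c := hc.1.lt_of_ne (by rintro rfl; exact ha.ne hψc)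
  have hcb : c < b := hc.2.trans_lt hd.2
  refine ⟨c, ⟨⟨hca, hcb⟩, hψc⟩, fun y ⟨hy, hψy⟩ => ?_⟩
  exact hmono.injOn (Ioo_subset_Ico_self hy) ⟨hca.le, hcb⟩ (hψy.trans hψc.symm)

theorem rpow_div_mul_eq_sq_div_iff_log {x y z p s : ℝ} (hx : 0 < x) (hy : 0 < y) (hz : 0 < z)
    (hs : 0 < s) :
    (x / (y * z)) ^ p = y ^ 2 / s ↔ p * log x - (p + 2) * log y - p * log z = -log s := by
  rw [← log_injOn_pos.eq_iff (mem_Ioi.2 (by positivity)) (mem_Ioi.2 (by positivity)),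
    log_rpow (by positivity), log_div hx.ne' (by positivity), log_mul hy.ne' hz.ne',
    log_div (by positivity) hs.ne', log_pow]
  push_cast
  constructor <;> intro h <;> linarith

namespace GrowthOptimal

noncomputable section

variable (θ : ℝ)

def A (c : ℝ) : ℝ := 2*θ - 1 + 2*c*θ

def B (c : ℝ) : ℝ := 2 - 2*θ - c*(2*θ - 1)

def lower : ℝ := (1 - θ)/θ

def upper : ℝ := (1 - θ)/(θ - 1/2)

def psi (c : ℝ) : ℝ := upper θ * log c - (upper θ + 2) * log (A θ c) - upper θ * log (B θ c)

variable {θ}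

theorem A_pos (hθ : 1/2 < θ) {c : ℝ} (hc : 0 < c) : 0 < A θ c := by
  unfold A; nlinarith

theorem B_pos (hθ : 1/2 < θ) {c : ℝ} (hc : c < upper θ) : 0 < B θ c := by
  rw [upper, lt_div_iff₀ (by linarith)] at hc
  unfold B; nlinarith

theorem lower_pos (hθ : θ ∈ Ioo (1/2) 1) : 0 < lower θ :=
  div_pos (by linarith [hθ.2]) (by linarith [hθ.1])

theorem lower_lt_upper (hθ : θ ∈ Ioo (1/2) 1) : lower θ < upper θ := by
  rw [lower, upper, div_lt_div_iff₀ (by linarith [hθ.1]) (by linarith [hθ.1])]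
  nlinarith [hθ.2]

theorem A_lower (hθ : θ ≠ 0) : A θ (lower θ) = 1 := by
  unfold A lower; field_simp; ring

theorem B_lower (hθ : θ ≠ 0) : B θ (lower θ) = lower θ := by
  unfold B lower; field_simp; ring

theorem B_upper (hθ : θ ≠ 1/2) : B θ (upper θ) = 0 := by
  unfold B upper
  rw [sub_eq_zero, div_mul_eq_mul_div, eq_div_iff (sub_ne_zero.2 hθ)]
  ring

theorem psi_lower (hθ : θ ≠ 0) : psi θ (lower θ) = 0 := by
  rw [psi, A_lower hθ, B_lower hθ, log_one]
  ring

theorem continuousOn_psi (hθ : θ ∈ Ioo (1/2) 1) :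
    ContinuousOn (psi θ) (Ico (lower θ) (upper θ)) := by
  have hpos : ∀ c ∈ Ico (lower θ) (upper θ), 0 < c := fun c hc => (lower_pos hθ).trans_le hc.1
  unfold psi
  refine ((continuousOn_const.mul (continuousOn_log.mono fun c hc => (hpos c hc).ne')).sub
    (continuousOn_const.mul (ContinuousOn.log ?_ fun c hc => (A_pos hθ.1 (hpos c hc)).ne'))).sub
    (continuousOn_const.mul (ContinuousOn.log ?_ fun c hc => (B_pos hθ.1 hc.2).ne'))
  · unfold A; fun_prop
  · unfold B; fun_prop

theorem hasDerivAt_psi (hθ : 1/2 < θ) {c : ℝ} (hc0 : 0 < c) (hc : c < upper θ) :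
    HasDerivAt (psi θ) (4 * ((1 - θ) - θ*c)^2 / (c * (A θ c * B θ c))) c := by
  have hA := A_pos hθ hc0
  have hB := B_pos hθ hc
  have hA' : HasDerivAt (A θ) (2*θ) c := by
    show HasDerivAt (fun x => 2*θ - 1 + 2*x*θ) _ c
    simpa [mul_assoc] using (((hasDerivAt_id c).mul_const θ).const_mul 2).const_add (2*θ - 1)
  have hB' : HasDerivAt (B θ) (-(2*θ - 1)) c := by
    show HasDerivAt (fun x => 2 - 2*θ - x*(2*θ - 1)) _ c
    simpa using ((hasDerivAt_id c).mul_const (2*θ - 1)).const_sub (2 - 2*θ)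
  refine ((((hasDerivAt_log hc0.ne').const_mul (upper θ)).sub
    ((hA'.log hA.ne').const_mul (upper θ + 2))).sub
      ((hB'.log hB.ne').const_mul (upper θ))).congr_deriv ?_
  have hupper : upper θ = 2 * (1 - θ) / (2*θ - 1) := by
    rw [upper, div_eq_div_iff (by linarith) (by linarith)]; ring
  rw [hupper]
  rw [A] at hA ⊢; rw [B] at hB ⊢
  have h2θ : 2*θ - 1 ≠ 0 := by linarith
  have hA₀ : 2*θ - 1 + 2*θ*c ≠ 0 := by linarith
  have hB₀ : 2*(1 - θ) - (2*θ - 1)*c ≠ 0 := by linarith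
  field_simp
  ring

theorem strictMonoOn_psi (hθ : θ ∈ Ioo (1/2) 1) :
    StrictMonoOn (psi θ) (Ico (lower θ) (upper θ)) := by
  refine strictMonoOn_of_deriv_pos (convex_Ico _ _) (continuousOn_psi hθ) fun c hc => ?_
  rw [interior_Ico] at hc
  have hc0 : 0 < c := (lower_pos hθ).trans hc.1
  have hgap : (1 - θ) - θ*c < 0 := by
    have := hc.1
    rw [lower, div_lt_iff₀ (by linarith [hθ.1])] at this
    linarith
  rw [(hasDerivAt_psi hθ.1 hc0 hc.2).deriv]
  exact div_pos (mul_pos four_pos (sq_pos_of_neg hgap))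
    (mul_pos hc0 (mul_pos (A_pos hθ.1 hc0) (B_pos hθ.1 hc.2)))

theorem tendsto_psi_upper (hθ : θ ∈ Ioo (1/2) 1) : Tendsto (psi θ) (𝓝[<] upper θ) atTop := by
  have hup : 0 < upper θ := (lower_pos hθ).trans (lower_lt_upper hθ)
  have hB : Tendsto (B θ) (𝓝[<] upper θ) (𝓝[>] 0) := by
    refine tendsto_nhdsWithin_iff.2
      ⟨?_, eventually_nhdsWithin_of_forall fun c hc => B_pos hθ.1 hc⟩
    rw [← B_upper (by linarith [hθ.1] : 1/2 < θ).ne']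
    exact ((show Continuous (B θ) by unfold B; fun_prop).tendsto _).mono_left nhdsWithin_le_nhds
  have hfinite : Tendsto (fun c => upper θ * log c - (upper θ + 2) * log (A θ c))
      (𝓝[<] upper θ) (𝓝 (upper θ * log (upper θ) - (upper θ + 2) * log (A θ (upper θ)))) := by
    refine ContinuousAt.tendsto ?_ |>.mono_left nhdsWithin_le_nhds
    have hA : ContinuousAt (A θ) (upper θ) := by unfold A; fun_prop
    exact (continuousAt_const.mul (continuousAt_log hup.ne')).sub
      (continuousAt_const.mul (hA.log (A_pos hθ.1 hup).ne'))
  have hinfinite : Tendsto (fun c => -(upper θ * log (B θ c))) (𝓝[<] upper θ) atTop :=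
    tendsto_neg_atBot_atTop.comp ((tendsto_log_nhdsGT_zero.comp hB).const_mul_atBot hup)
  exact (hfinite.add_atTop hinfinite).congr fun c => by simp only [psi]; ring

end

end GrowthOptimal

open GrowthOptimal in
theorem growth_optimal_f_unique_root_theta_between_half_and_one
    (lam θ : ℝ) (hlam : lam ∈ Set.Ioo (0:ℝ) 1) (hθ : θ ∈ Set.Ioo (1/2 : ℝ) 1)
    (f : ℝ → ℝ)
    (hf : ∀ c : ℝ, f c =
      (c / ((2*θ - 1 + 2*c*θ) * (2 - 2*θ - c*(2*θ - 1)))) ^ ((1 - θ)/(θ - 1/2))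
        - (2*θ - 1 + 2*c*θ)^2 / (1 - lam)) :
    ∃! c : ℝ, c ∈ Set.Ioo ((1 - θ)/θ) ((1 - θ)/(θ - 1/2)) ∧ f c = 0 := by
  obtain ⟨hlam0, hlam1⟩ := hlam
  have hroot : ∀ c ∈ Ioo (lower θ) (upper θ), f c = 0 ↔ psi θ c = -log (1 - lam) := by
    intro c hc
    have hc0 : 0 < c := (lower_pos hθ).trans hc.1
    rw [hf c, sub_eq_zero]
    exact rpow_div_mul_eq_sq_div_iff_log hc0 (A_pos hθ.1 hc0) (B_pos hθ.1 hc.2) (sub_pos.2 hlam1)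
  have hstart : psi θ (lower θ) < -log (1 - lam) := by
    rw [psi_lower (by linarith [hθ.1] : (0:ℝ) < θ).ne', neg_pos]
    exact log_neg (by linarith) (by linarith)
  refine (existsUnique_congr fun c => and_congr_right (hroot c)).2 ?_
  exact (strictMonoOn_psi hθ).existsUnique_mem_Ioo_eq_of_tendsto_atTop (continuousOn_psi hθ)
    (lower_lt_upper hθ) hstart (tendsto_psi_upper hθ)
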